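/- arXiv:2512.10872 — 2 statements merged into one kernel-verified Lean document; each statement's English description precedes it below -/
import Mathlib

section
/- For any d ≥ 2 and x, y, u, v ∈ ℝ^d with strictly positive coordinates, there exist x', y', u', v' ∈ ℝ² with strictly positive coordinates such that the extremal ratios are preserved (max_i y'_i/x'_i = max_i y_i/x_i, min_i y'_i/x'_i = min_i y_i/x_i, and similarly for (u,v)), and F₂(x',y';u',v') ≥ F_d(x,y;u,v), where F(x,y;u,v) := ((x·u)(y·v))/((x·v)(y·u)). -/
open Matrix

/-
Let M, m be the extreme values of y/x and c, A those of v/u, and split x = x₁ + x₂ with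
x₁, x₂ ≥ 0 and y = M x₁ + m x₂. Then F = (x·u)/(y·u) · (M X + m Y)/(X + Y) with X = x₁·v and
Y = x₂·v, so the second factor is a mean of M and m. As c u ≤ v ≤ A u, replacing X by A (x₁·u)
and Y by c (x₂·u) moves weight towards M and can only increase F, and the result is F at the
two-point configuration x' = (x₁·u, x₂·u), y' = (M x'₁, m x'₂), u' = (1, 1), v' = (A, c).
-/

noncomputable def crossRatio {ι : Type*} [Fintype ι] (x y u v : ι → ℝ) : ℝ :=
  (x ⬝ᵥ u) * (y ⬝ᵥ v) / ((x ⬝ᵥ v) * (y ⬝ᵥ u))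

lemma crossRatio_eq {ι : Type*} [Fintype ι] (x y u v : ι → ℝ) :
    crossRatio x y u v = (x ⬝ᵥ u) / (y ⬝ᵥ u) * ((y ⬝ᵥ v) / (x ⬝ᵥ v)) := by
  rw [crossRatio, mul_comm (x ⬝ᵥ v), mul_div_mul_comm]

lemma ciSup_fin_two {α : Type*} [ConditionallyCompleteLattice α] (f : Fin 2 → α) :
    ⨆ i, f i = f 0 ⊔ f 1 :=
  eq_of_forall_ge_iff fun _ => by
    simp [ciSup_le_iff (Finite.bddAbove_range f), Fin.forall_fin_two]

lemma ciInf_fin_two {α : Type*} [ConditionallyCompleteLattice α] (f : Fin 2 → α) :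
    ⨅ i, f i = f 0 ⊓ f 1 :=
  eq_of_forall_le_iff fun _ => by
    simp [le_ciInf_iff (Finite.bddBelow_range f), Fin.forall_fin_two]

lemma weightedMean_le_weightedMean {m M X Y X' Y' : ℝ} (hmM : m ≤ M) (hX : 0 ≤ X)
    (hXX' : X ≤ X') (hY' : 0 ≤ Y') (hY'Y : Y' ≤ Y) (hXY : 0 < X + Y) (hXY' : 0 < X' + Y') :
    (M * X + m * Y) / (X + Y) ≤ (M * X' + m * Y') / (X' + Y') := by
  rw [div_le_div_iff₀ hXY hXY']
  nlinarith [mul_nonneg (sub_nonneg.2 hmM) (sub_nonneg.2 (mul_le_mul hXX' hY'Y hY' (hX.trans hXX')))]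

lemma exists_convex_weights {ι : Type*} [Finite ι] [Nonempty ι] (a : ι → ℝ) :
    ∃ θ : ι → ℝ, (∀ i, θ i ∈ Set.Icc 0 1) ∧
      (∀ i, a i = θ i * (⨆ j, a j) + (1 - θ i) * ⨅ j, a j) ∧ (∃ i, 0 < θ i) ∧ ∃ i, θ i < 1 := by
  set M := ⨆ j, a j
  set m := ⨅ j, a j
  have haM : ∀ i, a i ≤ M := le_ciSup (Finite.bddAbove_range a)
  have hma : ∀ i, m ≤ a i := ciInf_le (Finite.bddBelow_range a)
  have hmM : m ≤ M := ciInf_le_ciSup (Finite.bddBelow_range a) (Finite.bddAbove_range a)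
  rcases hmM.eq_or_lt with h | h
  · obtain ⟨i⟩ := ‹Nonempty ι›
    refine ⟨fun _ => 1 / 2, fun _ => by norm_num, fun j => ?_, ⟨i, by norm_num⟩, ⟨i, by norm_num⟩⟩
    linarith [haM j, hma j]
  · obtain ⟨iM, hiM⟩ := exists_eq_ciSup_of_finite (f := a)
    obtain ⟨im, him⟩ := exists_eq_ciInf_of_finite (f := a)
    have hMm : 0 < M - m := sub_pos.2 h
    refine ⟨fun i => (a i - m) / (M - m), fun i => ⟨?_, ?_⟩, fun i => ?_, ⟨iM, ?_⟩, ⟨im, ?_⟩⟩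
    · exact div_nonneg (sub_nonneg.2 (hma i)) hMm.le
    · exact div_le_one_of_le₀ (by linarith [haM i]) hMm.le
    · field_simp; ring
    · dsimp only; rw [hiM, div_self hMm.ne']; exact one_pos
    · dsimp only; rw [him, sub_self, zero_div]; exact one_pos

theorem crossRatio_le_twoPoint {ι : Type*} [Fintype ι] {x y u v x₁ x₂ : ι → ℝ} {m M c A : ℝ}
    (hx : x = x₁ + x₂) (hy : y = M • x₁ + m • x₂) (hx₁ : 0 ≤ x₁) (hx₂ : 0 ≤ x₂) (hu : 0 ≤ u)
    (hcv : c • u ≤ v) (hvA : v ≤ A • u) (hm : 0 ≤ m) (hmM : m ≤ M) (hc : 0 < c)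
    (hxu : 0 < x ⬝ᵥ u) :
    crossRatio x y u v ≤
      crossRatio ![x₁ ⬝ᵥ u, x₂ ⬝ᵥ u] ![M * (x₁ ⬝ᵥ u), m * (x₂ ⬝ᵥ u)] ![1, 1] ![A, c] := by
  set P := x₁ ⬝ᵥ u
  set Q := x₂ ⬝ᵥ u
  set X := x₁ ⬝ᵥ v
  set Y := x₂ ⬝ᵥ v
  have hP : 0 ≤ P := dotProduct_nonneg_of_nonneg hx₁ hu
  have hQ : 0 ≤ Q := dotProduct_nonneg_of_nonneg hx₂ hu
  have hPQ : 0 < P + Q := by rwa [hx, add_dotProduct] at hxu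
  have hXA : X ≤ A * P := by
    simpa [P, dotProduct_smul] using dotProduct_le_dotProduct_of_nonneg_left hvA hx₁
  have hcX : c * P ≤ X := by
    simpa [P, dotProduct_smul] using dotProduct_le_dotProduct_of_nonneg_left hcv hx₁
  have hcY : c * Q ≤ Y := by
    simpa [Q, dotProduct_smul] using dotProduct_le_dotProduct_of_nonneg_left hcv hx₂
  have hXY : 0 < X + Y := by nlinarith
  have hAPcQ : 0 < A * P + c * Q := by nlinarith
  calc crossRatio x y u v = (P + Q) / (M * P + m * Q) * ((M * X + m * Y) / (X + Y)) := by
        simp only [crossRatio_eq, hx, hy, add_dotProduct, smul_dotProduct, smul_eq_mul, P, Q, X, Y]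
    _ ≤ (P + Q) / (M * P + m * Q) * ((M * (A * P) + m * (c * Q)) / (A * P + c * Q)) := by
        have hM : 0 ≤ M := hm.trans hmM
        refine mul_le_mul_of_nonneg_left ?_ (by positivity)
        exact weightedMean_le_weightedMean hmM ((by positivity : 0 ≤ c * P).trans hcX) hXA
          (by positivity) hcY hXY hAPcQ
    _ = _ := by
        rw [crossRatio_eq]
        simp only [dotProduct, Fin.sum_univ_two, cons_val_zero, cons_val_one, cons_val_fin_one]
        ring

section Ratios

variable {ι : Type*} [Finite ι] {x y : ι → ℝ}

lemma ciInf_div_smul_le (hx : ∀ i, 0 < x i) : (⨅ i, y i / x i) • x ≤ y := fun i =>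
  (le_div_iff₀ (hx i)).1 (ciInf_le (Finite.bddBelow_range _) i)

lemma le_ciSup_div_smul (hx : ∀ i, 0 < x i) : y ≤ (⨆ i, y i / x i) • x := fun i =>
  (div_le_iff₀ (hx i)).1 (le_ciSup (Finite.bddAbove_range fun i => y i / x i) i)

variable [Nonempty ι]

lemma ciInf_div_pos (hx : ∀ i, 0 < x i) (hy : ∀ i, 0 < y i) : 0 < ⨅ i, y i / x i :=
  let ⟨i, hi⟩ := exists_eq_ciInf_of_finite (f := fun i => y i / x i)
  (div_pos (hy i) (hx i)).trans_eq hi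

lemma ciInf_div_le_ciSup_div : ⨅ i, y i / x i ≤ ⨆ i, y i / x i :=
  ciInf_le_ciSup (Finite.bddBelow_range _) (Finite.bddAbove_range _)

lemma exists_split_of_ratio (hx : ∀ i, 0 < x i) :
    ∃ x₁ x₂ : ι → ℝ, 0 ≤ x₁ ∧ 0 ≤ x₂ ∧ x = x₁ + x₂ ∧
      y = (⨆ i, y i / x i) • x₁ + (⨅ i, y i / x i) • x₂ ∧ (∃ i, 0 < x₁ i) ∧ ∃ i, 0 < x₂ i := by
  obtain ⟨θ, hθ, ha, ⟨i₁, hi₁⟩, ⟨i₂, hi₂⟩⟩ := exists_convex_weights fun i => y i / x i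
  refine ⟨θ * x, (1 - θ) * x, fun i => mul_nonneg (hθ i).1 (hx i).le,
    fun i => mul_nonneg (sub_nonneg.2 (hθ i).2) (hx i).le, by ring, funext fun i => ?_,
    ⟨i₁, mul_pos hi₁ (hx i₁)⟩, ⟨i₂, mul_pos (sub_pos.2 hi₂) (hx i₂)⟩⟩
  rw [← div_mul_cancel₀ (y i) (hx i).ne', ha i]
  simp only [Pi.add_apply, Pi.smul_apply, Pi.mul_apply, Pi.sub_apply, Pi.one_apply, smul_eq_mul]
  ring

end Ratios

lemma dotProduct_pos_of_nonneg_of_exists_pos {ι : Type*} [Fintype ι] {x u : ι → ℝ} (hx : 0 ≤ x)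
    (hu : ∀ i, 0 < u i) (h : ∃ i, 0 < x i) : 0 < x ⬝ᵥ u :=
  let ⟨i, hi⟩ := h
  Finset.sum_pos' (fun j _ => mul_nonneg (hx j) (hu j).le) ⟨i, Finset.mem_univ i, mul_pos hi (hu i)⟩

theorem stmt14 (d : ℕ) (hd : 2 ≤ d) (x y u v : Fin d → ℝ)
    (hx : ∀ i, 0 < x i) (hy : ∀ i, 0 < y i)
    (hu : ∀ i, 0 < u i) (hv : ∀ i, 0 < v i) :
    ∃ x' y' u' v' : Fin 2 → ℝ,
      (∀ i, 0 < x' i) ∧ (∀ i, 0 < y' i) ∧ (∀ i, 0 < u' i) ∧ (∀ i, 0 < v' i) ∧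
      (⨆ i, y' i / x' i) = (⨆ i, y i / x i) ∧
      (⨅ i, y' i / x' i) = (⨅ i, y i / x i) ∧
      (⨆ i, v' i / u' i) = (⨆ i, v i / u i) ∧
      (⨅ i, v' i / u' i) = (⨅ i, v i / u i) ∧
      (x' ⬝ᵥ u') * (y' ⬝ᵥ v') / ((x' ⬝ᵥ v') * (y' ⬝ᵥ u')) ≥
        (x ⬝ᵥ u) * (y ⬝ᵥ v) / ((x ⬝ᵥ v) * (y ⬝ᵥ u)) := by
  have : Nonempty (Fin d) := ⟨⟨0, by omega⟩⟩
  obtain ⟨x₁, x₂, hx₁, hx₂, hx_eq, hy_eq, hx₁_pos, hx₂_pos⟩ := exists_split_of_ratio (y := y) hx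
  have hm := ciInf_div_pos hx hy
  have hc := ciInf_div_pos hu hv
  have hmM := ciInf_div_le_ciSup_div (x := x) (y := y)
  have hcA := ciInf_div_le_ciSup_div (x := u) (y := v)
  have hP := dotProduct_pos_of_nonneg_of_exists_pos hx₁ hu hx₁_pos
  have hQ := dotProduct_pos_of_nonneg_of_exists_pos hx₂ hu hx₂_pos
  refine ⟨![x₁ ⬝ᵥ u, x₂ ⬝ᵥ u], ![(⨆ i, y i / x i) * (x₁ ⬝ᵥ u), (⨅ i, y i / x i) * (x₂ ⬝ᵥ u)],
    ![1, 1], ![⨆ i, v i / u i, ⨅ i, v i / u i], Fin.forall_fin_two.2 ⟨hP, hQ⟩,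
    Fin.forall_fin_two.2 ⟨mul_pos (hm.trans_le hmM) hP, mul_pos hm hQ⟩,
    Fin.forall_fin_two.2 ⟨one_pos, one_pos⟩, Fin.forall_fin_two.2 ⟨hc.trans_le hcA, hc⟩,
    ?_, ?_, ?_, ?_, ?_⟩
  · simp [ciSup_fin_two, hP.ne', hQ.ne', hmM]
  · simp [ciInf_fin_two, hP.ne', hQ.ne', hmM]
  · simp [ciSup_fin_two, hcA]
  · simp [ciInf_fin_two, hcA]
  · exact crossRatio_le_twoPoint hx_eq hy_eq hx₁ hx₂ (fun i => (hu i).le) (ciInf_div_smul_le hu)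
      (le_ciSup_div_smul hu) hm.le hmM hc (by rw [hx_eq, add_dotProduct]; exact add_pos hP hQ)
end

section
/- Let (A_n) be a sequence of matrices with strictly positive entries and compatible sizes (all dimensions ≥ 2), and suppose R(A_n) ≤ α for all n, with α ≥ 1. Set κ := (√α − 1)/(√α + 1). Then the products P_n = A_n ⋯ A_1 satisfy R(P_n) ≤ 1 + 4κⁿ/(1 − κⁿ)² for every n ≥ 1; in particular R(P_n) → 1 as n → ∞. -/
noncomputable def Rdist {m n : ℕ} (A : Matrix (Fin m) (Fin n) ℝ) : ℝ :=
  ⨆ i, ⨆ j, ⨆ k, ⨆ l, A i k * A j l / (A i l * A j k)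


lemma diamond (x y S : ℝ) (hx : 1 ≤ x) (hy : 1 ≤ y) (hS1 : 1 ≤ S) (hS2 : S ≤ y^2) :
    (S-1)*(y^2-S)*(x+y)^2 ≤ (y^2-1)*S*(x^2*(S-1)+(y^2-S)) := by
  nlinarith [sq_nonneg ((1+x*y)*S - y*(x+y)), mul_nonneg (sub_nonneg.2 hS1) (sub_nonneg.2 hS2),
    mul_nonneg (mul_nonneg (sub_nonneg.2 hS1) (sub_nonneg.2 hS2)) (sq_nonneg (x-y)),
    mul_nonneg (mul_nonneg (sub_nonneg.2 hS1) (sub_nonneg.2 hS2)) (sq_nonneg (x*y-1)),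
    mul_nonneg (sub_nonneg.2 hS1) (sq_nonneg ((1+x*y)*S - y*(x+y))),
    mul_nonneg (sub_nonneg.2 hS2) (sq_nonneg ((1+x*y)*S - y*(x+y)))]

lemma star (x y T S : ℝ) (hx : 1 ≤ x) (hy : 1 ≤ y)
    (hT1 : 1 ≤ T) (hT2 : T ≤ x^2) (hS1 : 1 ≤ S) (hS2 : S ≤ y^2)
    (hPQ : (T-1)*(y^2-S) ≤ (x^2-T)*(S-1)) :
    (T-1)*(y^2-S)*(x+y)^2 ≤ (x^2-1)*(y^2-1)*T*S := by
  rcases le_or_gt ((x^2-1)*(y^2-1)*S) ((y^2-S)*(x+y)^2) with ha | ha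
  · rcases eq_or_lt_of_le hy with hy1 | hy1
    · have h1 : y^2 = 1 := by rw [← hy1]; ring
      have hS : S = 1 := le_antisymm (by linarith) hS1
      rw [hS, h1]; ring_nf
      nlinarith [mul_nonneg (sub_nonneg.2 hT1) (sq_nonneg (x+y))]
    · have hD : 0 ≤ x^2*(S-1)+(y^2-S) - T*(y^2-1) := by nlinarith
      have hΦ := diamond x y S hx hy hS1 hS2
      have hy2 : 0 < y^2 - 1 := by nlinarith
      have key : 0 ≤ (y^2-1) * ((x^2-1)*(y^2-1)*T*S - (T-1)*(y^2-S)*(x+y)^2) := by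
        have h1 : 0 ≤ ((y^2-S)*(x+y)^2 - (x^2-1)*(y^2-1)*S) * (x^2*(S-1)+(y^2-S) - T*(y^2-1)) :=
          mul_nonneg (by linarith) hD
        have h2 : 0 ≤ (x^2-1) * ((y^2-1)*S*(x^2*(S-1)+(y^2-S)) - (S-1)*(y^2-S)*(x+y)^2) :=
          mul_nonneg (by nlinarith) (by linarith)
        nlinarith [h1, h2]
      nlinarith [key, hy2]
  · nlinarith [mul_nonneg (sub_nonneg.2 hT1) (le_of_lt (sub_pos.2 ha)),
      mul_nonneg (mul_nonneg (by nlinarith : (0:ℝ) ≤ x^2-1) (by nlinarith : (0:ℝ) ≤ y^2-1)) (by linarith : (0:ℝ) ≤ S)]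

lemma scalarA {ι : Type*} [Fintype ι] [Nonempty ι] (w t s : ι → ℝ) (x y : ℝ)
    (hx : 1 ≤ x) (hy : 1 ≤ y) (hw : ∀ p, 0 < w p) (hW : ∑ p, w p = 1)
    (ht1 : ∀ p, 1 ≤ t p) (ht2 : ∀ p, t p ≤ x^2)
    (hs1 : ∀ p, 1 ≤ s p) (hs2 : ∀ p, s p ≤ y^2) :
    (∑ p, w p * (t p * s p)) * (x+y)^2
      ≤ (1+x*y)^2 * ((∑ p, w p * t p) * (∑ p, w p * s p)) := by
  set T := ∑ p, w p * t p with hT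
  set S := ∑ p, w p * s p with hS
  set X := ∑ p, w p * (t p * s p) with hX
  have hT1 : 1 ≤ T := by
    rw [hT, ← hW]; exact Finset.sum_le_sum fun p _ => le_mul_of_one_le_right (hw p).le (ht1 p)
  have hT2 : T ≤ x^2 := by
    calc T ≤ ∑ p, w p * x^2 := Finset.sum_le_sum fun p _ =>
          mul_le_mul_of_nonneg_left (ht2 p) (hw p).le
    _ = x^2 := by rw [← Finset.sum_mul, hW, one_mul]
  have hS1 : 1 ≤ S := by
    rw [hS, ← hW]; exact Finset.sum_le_sum fun p _ => le_mul_of_one_le_right (hw p).le (hs1 p)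
  have hS2 : S ≤ y^2 := by
    calc S ≤ ∑ p, w p * y^2 := Finset.sum_le_sum fun p _ =>
          mul_le_mul_of_nonneg_left (hs2 p) (hw p).le
    _ = y^2 := by rw [← Finset.sum_mul, hW, one_mul]
  have hi : X ≤ y^2*T + S - y^2 := by
    have h1 : X ≤ ∑ p, (y^2 * (w p * t p) + w p * s p - y^2 * w p) := by
      apply Finset.sum_le_sum; intro p _
      nlinarith [hw p, ht1 p, hs2 p, mul_nonneg (hw p).le (mul_nonneg (sub_nonneg.2 (ht1 p)) (sub_nonneg.2 (hs2 p)))]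
    calc X ≤ _ := h1
    _ = y^2*T + S - y^2 := by
      rw [Finset.sum_sub_distrib, Finset.sum_add_distrib, ← Finset.mul_sum, ← Finset.mul_sum, hW, ← hT, ← hS]; ring
  have hii : X ≤ x^2*S + T - x^2 := by
    have h1 : X ≤ ∑ p, (x^2 * (w p * s p) + w p * t p - x^2 * w p) := by
      apply Finset.sum_le_sum; intro p _
      nlinarith [hw p, hs1 p, ht2 p, mul_nonneg (hw p).le (mul_nonneg (sub_nonneg.2 (hs1 p)) (sub_nonneg.2 (ht2 p)))]
    calc X ≤ _ := h1
    _ = x^2*S + T - x^2 := by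
      rw [Finset.sum_sub_distrib, Finset.sum_add_distrib, ← Finset.mul_sum, ← Finset.mul_sum, hW, ← hT, ← hS]; ring
  rcases le_total ((T-1)*(y^2-S)) ((x^2-T)*(S-1)) with hc | hc
  · have hst := star x y T S hx hy hT1 hT2 hS1 hS2 hc
    nlinarith [mul_le_mul_of_nonneg_right hi (sq_nonneg (x+y))]
  · have hst := star y x S T hy hx hS1 hS2 hT1 hT2 (by nlinarith)
    nlinarith [mul_le_mul_of_nonneg_right hii (sq_nonneg (x+y))]

lemma scalarB {ι : Type*} [Fintype ι] [Nonempty ι] (w t s : ι → ℝ) (x y : ℝ)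
    (hx : 1 ≤ x) (hy : 1 ≤ y) (hw : ∀ p, 0 < w p)
    (ht1 : ∀ p, 1 ≤ t p) (ht2 : ∀ p, t p ≤ x^2)
    (hs1 : ∀ p, 1 ≤ s p) (hs2 : ∀ p, s p ≤ y^2) :
    (∑ p, w p * (t p * s p)) * (∑ p, w p) * (x+y)^2
      ≤ (1+x*y)^2 * ((∑ p, w p * t p) * (∑ p, w p * s p)) := by
  set W := ∑ p, w p with hWdef
  have hWpos : 0 < W := Finset.sum_pos (fun p _ => hw p) Finset.univ_nonempty
  have hA := scalarA (fun p => w p / W) t s x y hx hy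
    (fun p => div_pos (hw p) hWpos)
    (by rw [← Finset.sum_div, div_self hWpos.ne']) ht1 ht2 hs1 hs2
  have eX : (∑ p, w p / W * (t p * s p)) = (∑ p, w p * (t p * s p)) / W := by
    rw [Finset.sum_div]; exact Finset.sum_congr rfl fun p _ => by ring
  have eT : (∑ p, w p / W * t p) = (∑ p, w p * t p) / W := by
    rw [Finset.sum_div]; exact Finset.sum_congr rfl fun p _ => by ring
  have eS : (∑ p, w p / W * s p) = (∑ p, w p * s p) / W := by
    rw [Finset.sum_div]; exact Finset.sum_congr rfl fun p _ => by ring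
  rw [eX, eT, eS] at hA
  have h2 := mul_le_mul_of_nonneg_left hA (le_of_lt (mul_pos hWpos hWpos))
  have e1 : W * W * ((∑ p, w p * (t p * s p)) / W * (x + y) ^ 2)
      = (∑ p, w p * (t p * s p)) * W * (x+y)^2 := by field_simp; try ring
  have e2 : W * W * ((1 + x * y) ^ 2 * ((∑ p, w p * t p) / W * ((∑ p, w p * s p) / W)))
      = (1+x*y)^2 * ((∑ p, w p * t p) * (∑ p, w p * s p)) := by field_simp; try ring
  rw [e1, e2] at h2; exact h2

lemma scalarC {ι : Type*} [Fintype ι] [Nonempty ι] (w t s : ι → ℝ) (x y : ℝ)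
    (hx : 1 ≤ x) (hy : 1 ≤ y) (hw : ∀ p, 0 < w p)
    (ht : ∀ p, 0 < t p) (hs : ∀ p, 0 < s p)
    (hrt : ∀ p q, t p ≤ x^2 * t q) (hrs : ∀ p q, s p ≤ y^2 * s q) :
    (∑ p, w p * (t p * s p)) * (∑ p, w p) * (x+y)^2
      ≤ (1+x*y)^2 * ((∑ p, w p * t p) * (∑ p, w p * s p)) := by
  obtain ⟨p₀, -, hp₀⟩ := Finset.exists_min_image Finset.univ t Finset.univ_nonempty
  obtain ⟨q₀, -, hq₀⟩ := Finset.exists_min_image Finset.univ s Finset.univ_nonempty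
  have htp := ht p₀
  have hsq := hs q₀
  have hB := scalarB w (fun p => t p / t p₀) (fun p => s p / s q₀) x y hx hy hw
    (fun p => (one_le_div htp).2 (hp₀ p (Finset.mem_univ p)))
    (fun p => (div_le_iff₀ htp).2 (hrt p p₀))
    (fun p => (one_le_div hsq).2 (hq₀ p (Finset.mem_univ p)))
    (fun p => (div_le_iff₀ hsq).2 (hrs p q₀))
  have eX : (∑ p, w p * (t p / t p₀ * (s p / s q₀)))
      = (∑ p, w p * (t p * s p)) / (t p₀ * s q₀) := by
    rw [Finset.sum_div]; exact Finset.sum_congr rfl fun p _ => by ring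
  have eT : (∑ p, w p * (t p / t p₀)) = (∑ p, w p * t p) / t p₀ := by
    rw [Finset.sum_div]; exact Finset.sum_congr rfl fun p _ => by ring
  have eS : (∑ p, w p * (s p / s q₀)) = (∑ p, w p * s p) / s q₀ := by
    rw [Finset.sum_div]; exact Finset.sum_congr rfl fun p _ => by ring
  rw [eX, eT, eS] at hB
  have hpos : 0 < t p₀ * s q₀ := mul_pos htp hsq
  have h2 := mul_le_mul_of_nonneg_left hB (le_of_lt hpos)
  have e1 : t p₀ * s q₀ * ((∑ p, w p * (t p * s p)) / (t p₀ * s q₀) * (∑ p, w p) * (x + y) ^ 2)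
      = (∑ p, w p * (t p * s p)) * (∑ p, w p) * (x+y)^2 := by field_simp; try ring
  have e2 : t p₀ * s q₀ * ((1 + x * y) ^ 2 * ((∑ p, w p * t p) / t p₀ * ((∑ p, w p * s p) / s q₀)))
      = (1+x*y)^2 * ((∑ p, w p * t p) * (∑ p, w p * s p)) := by field_simp; try ring
  rw [e1, e2] at h2; exact h2



lemma rows {ι : Type*} [Fintype ι] [Nonempty ι] (u v a b : ι → ℝ) (x y : ℝ)
    (hx : 1 ≤ x) (hy : 1 ≤ y)
    (hu : ∀ p, 0 < u p) (hv : ∀ p, 0 < v p) (ha : ∀ p, 0 < a p) (hb : ∀ p, 0 < b p)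
    (huv : ∀ p q, u p * v q ≤ x^2 * (u q * v p))
    (hab : ∀ p q, a p * b q ≤ y^2 * (a q * b p)) :
    (∑ p, u p * a p) * (∑ p, v p * b p) * (x+y)^2
      ≤ (1+x*y)^2 * ((∑ p, v p * a p) * (∑ p, u p * b p)) := by
  have hC := scalarC (fun p => v p * b p) (fun p => u p / v p) (fun p => a p / b p) x y hx hy
    (fun p => mul_pos (hv p) (hb p)) (fun p => div_pos (hu p) (hv p))
    (fun p => div_pos (ha p) (hb p))
    (fun p q => by
      rw [div_le_iff₀ (hv p), mul_comm (x^2) (u q / v q), mul_assoc]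
      rw [div_mul_eq_mul_div, le_div_iff₀ (hv q)]
      calc u p * v q ≤ x^2 * (u q * v p) := huv p q
        _ = u q * (x ^ 2 * v p) := by ring)
    (fun p q => by
      rw [div_le_iff₀ (hb p), mul_comm (y^2) (a q / b q), mul_assoc]
      rw [div_mul_eq_mul_div, le_div_iff₀ (hb q)]
      calc a p * b q ≤ y^2 * (a q * b p) := hab p q
        _ = a q * (y ^ 2 * b p) := by ring)
  have eX : (∑ p, v p * b p * (u p / v p * (a p / b p))) = ∑ p, u p * a p :=
    Finset.sum_congr rfl fun p _ => by
      field_simp [(hv p).ne', (hb p).ne']; try ring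
  have eT : (∑ p, v p * b p * (u p / v p)) = ∑ p, u p * b p :=
    Finset.sum_congr rfl fun p _ => by
      field_simp [(hv p).ne']
  have eS : (∑ p, v p * b p * (a p / b p)) = ∑ p, v p * a p :=
    Finset.sum_congr rfl fun p _ => by
      field_simp [(hb p).ne']
  rw [eX, eT, eS] at hC
  calc (∑ p, u p * a p) * (∑ p, v p * b p) * (x+y)^2
      ≤ (1+x*y)^2 * ((∑ p, u p * b p) * (∑ p, v p * a p)) := hC
    _ = (1+x*y)^2 * ((∑ p, v p * a p) * (∑ p, u p * b p)) := by ring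

lemma Rdist_le {m n : ℕ} (M : Matrix (Fin m) (Fin n) ℝ) (hm : 0 < m) (hn : 0 < n)
    (hpos : ∀ i j, 0 < M i j) (c : ℝ)
    (h : ∀ i j k l, M i k * M j l ≤ c * (M i l * M j k)) : Rdist M ≤ c := by
  haveI : Nonempty (Fin m) := ⟨⟨0, hm⟩⟩
  haveI : Nonempty (Fin n) := ⟨⟨0, hn⟩⟩
  refine ciSup_le fun i => ciSup_le fun j => ciSup_le fun k => ciSup_le fun l => ?_
  rw [div_le_iff₀ (mul_pos (hpos i l) (hpos j k))]
  exact h i j k l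

lemma le_Rdist {m n : ℕ} (M : Matrix (Fin m) (Fin n) ℝ) (i j : Fin m) (k l : Fin n) :
    M i k * M j l / (M i l * M j k) ≤ Rdist M := by
  calc M i k * M j l / (M i l * M j k) ≤ ⨆ l, M i k * M j l / (M i l * M j k) :=
        le_ciSup (f := fun l => M i k * M j l / (M i l * M j k)) (Set.Finite.bddAbove (Set.finite_range _)) l
    _ ≤ ⨆ k, ⨆ l, M i k * M j l / (M i l * M j k) :=
        le_ciSup (f := fun k => ⨆ l, M i k * M j l / (M i l * M j k))
          (Set.Finite.bddAbove (Set.finite_range _)) k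
    _ ≤ ⨆ j, ⨆ k, ⨆ l, M i k * M j l / (M i l * M j k) :=
        le_ciSup (f := fun j => ⨆ k, ⨆ l, M i k * M j l / (M i l * M j k))
          (Set.Finite.bddAbove (Set.finite_range _)) j
    _ ≤ Rdist M := by
        show _ ≤ ⨆ i, ⨆ j, ⨆ k, ⨆ l, M i k * M j l / (M i l * M j k)
        exact le_ciSup (f := fun i => ⨆ j, ⨆ k, ⨆ l, M i k * M j l / (M i l * M j k))
          (Set.Finite.bddAbove (Set.finite_range _)) i

lemma one_le_Rdist {m n : ℕ} (M : Matrix (Fin m) (Fin n) ℝ) (hm : 0 < m) (hn : 0 < n)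
    (hpos : ∀ i j, 0 < M i j) : 1 ≤ Rdist M := by
  have i : Fin m := ⟨0, hm⟩
  have k : Fin n := ⟨0, hn⟩
  have h := le_Rdist M i i k k
  rwa [div_self (mul_pos (hpos i k) (hpos i k)).ne'] at h

lemma Rdist_pt {m n : ℕ} (M : Matrix (Fin m) (Fin n) ℝ) (hpos : ∀ i j, 0 < M i j)
    (c : ℝ) (hc : Rdist M ≤ c) (i j : Fin m) (k l : Fin n) :
    M i k * M j l ≤ c * (M i l * M j k) := by
  have h := (le_Rdist M i j k l).trans hc
  rwa [div_le_iff₀ (mul_pos (hpos i l) (hpos j k))] at h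


theorem stmt18 (d : ℕ → ℕ) (hd : ∀ n, 2 ≤ d n)
    (A : (n : ℕ) → Matrix (Fin (d (n + 1))) (Fin (d n)) ℝ)
    (hApos : ∀ n i j, 0 < A n i j)
    (α : ℝ) (hα : 1 ≤ α) (hRA : ∀ n, Rdist (A n) ≤ α)
    (κ : ℝ) (hκ : κ = (Real.sqrt α - 1) / (Real.sqrt α + 1))
    (P : (n : ℕ) → Matrix (Fin (d (n + 1))) (Fin (d 0)) ℝ)
    (hP0 : P 0 = A 0) (hPs : ∀ n, P (n + 1) = A (n + 1) * P n) :
    (∀ n : ℕ, Rdist (P n) ≤ 1 + 4 * κ ^ (n + 1) / (1 - κ ^ (n + 1)) ^ 2) ∧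
    Filter.Tendsto (fun n => Rdist (P n)) Filter.atTop (nhds 1) := by
  have hα0 : (0:ℝ) ≤ α := le_trans zero_le_one hα
  set x := Real.sqrt α with hxdef
  have hx1 : 1 ≤ x := by
    rw [hxdef, show (1:ℝ) = Real.sqrt 1 by simp]
    exact Real.sqrt_le_sqrt hα
  have hx2 : x^2 = α := Real.sq_sqrt hα0
  have hκ0 : 0 ≤ κ := by rw [hκ]; apply div_nonneg <;> linarith
  have hκ1 : κ < 1 := by rw [hκ, div_lt_one (by linarith)]; linarith
  have h1κ : (0:ℝ) < 1 - κ := by linarith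
  have hxform : x = (1+κ)/(1-κ) := by
    rw [eq_div_iff h1κ.ne', hκ]
    field_simp
    ring
  set y : ℕ → ℝ := fun n => (1+κ^(n+1))/(1-κ^(n+1)) with hydef
  have hκpow : ∀ n : ℕ, κ^(n+1) < 1 := fun n => pow_lt_one₀ hκ0 hκ1 (Nat.succ_ne_zero n)
  have hκpow0 : ∀ n : ℕ, 0 ≤ κ^(n+1) := fun n => pow_nonneg hκ0 _
  have hden : ∀ n : ℕ, 0 < 1 - κ^(n+1) := fun n => by linarith [hκpow n]
  have hy1 : ∀ n, 1 ≤ y n := fun n =>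
    (one_le_div (hden n)).2 (by linarith [hκpow0 n])
  have hdpos : ∀ n, 0 < d n := fun n => lt_of_lt_of_le two_pos (hd n)
  have hPpos : ∀ n, ∀ i j, 0 < P n i j := by
    intro n; induction n with
    | zero => rw [hP0]; exact hApos 0
    | succ n ih =>
      intro i j
      rw [hPs n, Matrix.mul_apply]
      exact Finset.sum_pos (fun p _ => mul_pos (hApos (n+1) i p) (ih p j))
        ⟨⟨0, hdpos (n+1)⟩, Finset.mem_univ _⟩
  have key : ∀ n, Rdist (P n) ≤ (y n)^2 := by
    intro n; induction n with
    | zero =>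
      rw [hP0]
      calc Rdist (A 0) ≤ α := hRA 0
        _ = (y 0)^2 := by
            rw [← hx2]; congr 1
            rw [hxform, hydef]; norm_num
    | succ n ih =>
      haveI : Nonempty (Fin (d (n+1))) := ⟨⟨0, hdpos (n+1)⟩⟩
      have hyn := hy1 n
      apply Rdist_le _ (hdpos (n+2)) (hdpos 0) (hPpos (n+1))
      intro i j k l
      have hR := rows (fun p => A (n+1) i p) (fun p => A (n+1) j p)
          (fun p => P n p k) (fun p => P n p l) x (y n) hx1 hyn
          (fun p => hApos (n+1) i p) (fun p => hApos (n+1) j p)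
          (fun p => hPpos n p k) (fun p => hPpos n p l)
          (fun p q => by
            have h := Rdist_pt (A (n+1)) (hApos (n+1)) α (hRA (n+1)) i j p q
            rw [hx2]; exact h)
          (fun p q => by
            have h := Rdist_pt (P n) (hPpos n) ((y n)^2) ih p q k l
            calc P n p k * P n q l ≤ (y n)^2 * (P n p l * P n q k) := h
              _ = (y n)^2 * (P n q k * P n p l) := by ring)
      have em : ∀ (i' : Fin (d (n+2))) (k' : Fin (d 0)),
          P (n+1) i' k' = ∑ p, A (n+1) i' p * P n p k' := fun i' k' => by
        rw [hPs n, Matrix.mul_apply]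
      rw [← em i k, ← em j l, ← em j k, ← em i l] at hR
      have hid : 1 + x * y n = y (n+1) * (x + y n) := by
        rw [hxform, hydef]
        have e1 := (hden n).ne'
        have e2 := (hden (n+1)).ne'
        field_simp
        ring
      have hxy : 0 < x + y n := by linarith
      rw [hid] at hR
      have h2 : P (n+1) i k * P (n+1) j l * (x+y n)^2
          ≤ ((y (n+1))^2 * (P (n+1) i l * P (n+1) j k)) * (x+y n)^2 := by
        calc P (n+1) i k * P (n+1) j l * (x+y n)^2
            ≤ (y (n+1) * (x + y n))^2 * (P (n+1) j k * P (n+1) i l) := hR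
          _ = ((y (n+1))^2 * (P (n+1) i l * P (n+1) j k)) * (x+y n)^2 := by ring
      exact le_of_mul_le_mul_right h2 (pow_pos hxy 2)
  have part1 : ∀ n, Rdist (P n) ≤ 1 + 4*κ^(n+1)/(1-κ^(n+1))^2 := by
    intro n
    have he : (y n)^2 = 1 + 4*κ^(n+1)/(1-κ^(n+1))^2 := by
      rw [hydef]
      have e1 := (hden n).ne'
      field_simp
      ring
    rw [← he]; exact key n
  refine ⟨part1, ?_⟩
  have hlow : ∀ n, 1 ≤ Rdist (P n) := fun n =>
    one_le_Rdist _ (hdpos (n+1)) (hdpos 0) (hPpos n)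
  have h0 : Filter.Tendsto (fun n : ℕ => κ^(n+1)) Filter.atTop (nhds 0) :=
    (tendsto_pow_atTop_nhds_zero_of_lt_one hκ0 hκ1).comp (Filter.tendsto_add_atTop_nat 1)
  have hupper : Filter.Tendsto (fun n => 1 + 4*κ^(n+1)/(1-κ^(n+1))^2)
      Filter.atTop (nhds 1) := by
    have ht : Filter.Tendsto (fun n => 1 + 4*κ^(n+1)/(1-κ^(n+1))^2)
        Filter.atTop (nhds (1 + 4*(0:ℝ)/(1-0)^2)) := by
      apply Filter.Tendsto.add tendsto_const_nhds
      exact Filter.Tendsto.div (h0.const_mul 4) ((tendsto_const_nhds.sub h0).pow 2) (by norm_num)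
    norm_num at ht
    exact ht
  exact tendsto_of_tendsto_of_tendsto_of_le_of_le tendsto_const_nhds hupper hlow part1
end
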